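/- arXiv:q-alg/9608014 — 6 statements merged into one kernel-verified Lean document; each statement's English description precedes it below -/
import Mathlib

section
/- Let r ≥ 4 be an even integer and A ∈ ℂ a primitive 4r-th root of unity, with [n] = (A^{2n} − A^{−2n})/(A² − A^{−2}). Then ∑_{n odd, 1 ≤ n ≤ r−1} [n]² = −r/(A² − A^{−2})² and ∑_{n even, 2 ≤ n ≤ r−2} [n]² = −r/(A² − A^{−2})². In particular the total sum ω² = ∑_{n=1}^{r−1}[n]² satisfies ω² = 2∑_{n odd}[n]² = 2∑_{n even}[n]². -/
/-!
With `q = A ^ 4`, a primitive `r`-th root of unity, `(A² - A⁻²)² [n]² = qⁿ + q⁻ⁿ - 2`.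
Summed over a full period of `q` (all `n < r`) or of `q²` (even `n = 2k`, `k < r / 2`), the
geometric sums of `q^{±n}` vanish and only `-2` per term survives; `[0] = 0`, so the sums may
start at `n = 0`. The odd sum is the total minus the even one.
-/

noncomputable def qint (A : ℂ) (n : ℕ) : ℂ :=
  (A ^ (2 * n) - A⁻¹ ^ (2 * n)) / (A ^ 2 - A⁻¹ ^ 2)

open Finset

lemma IsPrimitiveRoot.sum_range_pow_add_inv_sub_two {K : Type*} [Field K] {ζ : K} {m : ℕ}
    (hζ : IsPrimitiveRoot ζ m) (hm : 1 < m) :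
    ∑ k ∈ range m, (ζ ^ k + (ζ ^ k)⁻¹ - 2) = -2 * m := by
  simp only [← inv_pow]
  rw [sum_sub_distrib, sum_add_distrib, hζ.geom_sum_eq_zero hm, hζ.inv.geom_sum_eq_zero hm]
  simp [mul_comm]

lemma qint_sq {A : ℂ} (hA : A ≠ 0) (n : ℕ) :
    qint A n ^ 2 = ((A ^ 4) ^ n + ((A ^ 4) ^ n)⁻¹ - 2) / (A ^ 2 - A⁻¹ ^ 2) ^ 2 := by
  have h : (A ^ 4) ^ n = (A ^ (2 * n)) ^ 2 := by ring
  rw [qint, div_pow, h, inv_pow A]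
  congr 1
  field_simp
  ring

lemma sum_range_qint_mul_sq {A : ℂ} {j m : ℕ} (hA : IsPrimitiveRoot ((A ^ 4) ^ j) m)
    (hm : 1 < m) :
    ∑ k ∈ range m, qint A (j * k) ^ 2 = -2 * m / (A ^ 2 - A⁻¹ ^ 2) ^ 2 := by
  have hA0 : A ≠ 0 := by
    rintro rfl
    rcases j.eq_zero_or_pos with rfl | hj
    · exact hA.ne_one hm (pow_zero _)
    · exact hA.ne_zero (by omega) (by simp; omega)
  simp only [qint_sq hA0, pow_mul _ j, ← sum_div, hA.sum_range_pow_add_inv_sub_two hm]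

lemma sum_Icc_one_pred_eq_sum_range {M : Type*} [AddCommMonoid M] {f : ℕ → M} (hf : f 0 = 0)
    (m : ℕ) : ∑ n ∈ Icc 1 (m - 1), f n = ∑ n ∈ range m, f n := by
  have : Icc 1 (m - 1) = (range m).erase 0 := by ext n; simp; omega
  rw [this, sum_erase _ hf]

lemma filter_even_range_two_mul (t : ℕ) :
    (range (2 * t)).filter Even = (range t).image (2 * ·) := by
  ext n
  simp only [mem_filter, mem_range, mem_image, Nat.even_iff]
  constructor
  · rintro ⟨hn, hev⟩
    exact ⟨n / 2, by omega, by omega⟩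
  · rintro ⟨k, hk, rfl⟩
    omega

lemma sum_Icc_qint_sq {A : ℂ} {m : ℕ} (hA : IsPrimitiveRoot (A ^ 4) m) (hm : 1 < m) :
    ∑ n ∈ Icc 1 (m - 1), qint A n ^ 2 = -2 * m / (A ^ 2 - A⁻¹ ^ 2) ^ 2 := by
  rw [sum_Icc_one_pred_eq_sum_range (f := fun n ↦ qint A n ^ 2) (by simp [qint])]
  simpa using sum_range_qint_mul_sq (j := 1) (by simpa using hA) hm

lemma sum_filter_even_Icc_qint_sq {A : ℂ} {t : ℕ} (hA : IsPrimitiveRoot (A ^ 4) (2 * t))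
    (ht : 1 < t) :
    ∑ n ∈ (Icc 1 (2 * t - 1)).filter Even, qint A n ^ 2 =
      -2 * t / (A ^ 2 - A⁻¹ ^ 2) ^ 2 := by
  rw [sum_filter, sum_Icc_one_pred_eq_sum_range (by simp [qint]), ← sum_filter,
    filter_even_range_two_mul, sum_image (by intro a _ b _ h; simpa using h)]
  exact sum_range_qint_mul_sq (hA.pow (by omega) rfl) ht

theorem stmt_1 (r : ℕ) (hr : 4 ≤ r) (hre : Even r) (A : ℂ)
    (hA : IsPrimitiveRoot A (4 * r)) :
    (∑ n ∈ (Finset.Icc 1 (r - 1)).filter (fun n => Odd n), (qint A n) ^ 2 =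
        -(r : ℂ) / (A ^ 2 - A⁻¹ ^ 2) ^ 2) ∧
    (∑ n ∈ (Finset.Icc 1 (r - 1)).filter (fun n => Even n), (qint A n) ^ 2 =
        -(r : ℂ) / (A ^ 2 - A⁻¹ ^ 2) ^ 2) ∧
    (∑ n ∈ Finset.Icc 1 (r - 1), (qint A n) ^ 2 =
        2 * ∑ n ∈ (Finset.Icc 1 (r - 1)).filter (fun n => Odd n), (qint A n) ^ 2) ∧
    (∑ n ∈ Finset.Icc 1 (r - 1), (qint A n) ^ 2 =
        2 * ∑ n ∈ (Finset.Icc 1 (r - 1)).filter (fun n => Even n), (qint A n) ^ 2) := by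
  obtain ⟨t, rfl⟩ := hre.two_dvd
  have hA4 : IsPrimitiveRoot (A ^ 4) (2 * t) := hA.pow (by omega) rfl
  have hsplit :=
    sum_filter_add_sum_filter_not (Icc 1 (2 * t - 1)) Odd (fun n ↦ qint A n ^ 2)
  simp only [Nat.not_odd_iff_even] at hsplit
  have htotal := sum_Icc_qint_sq hA4 (by omega)
  have heven := sum_filter_even_Icc_qint_sq hA4 (by omega)
  push_cast at htotal heven ⊢
  have hodd : ∑ n ∈ (Icc 1 (2 * t - 1)).filter Odd, qint A n ^ 2
      = -(2 * t) / (A ^ 2 - A⁻¹ ^ 2) ^ 2 := by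
    linear_combination hsplit + htotal - heven
  refine ⟨hodd, ?_, ?_, ?_⟩
  · rw [heven]; ring
  · rw [htotal, hodd]; ring
  · rw [htotal, heven]; ring
end

section
/- Let r ≡ 0 (mod 4), A a primitive 4r-th root of unity, [n] = (A^{2n}−A^{−2n})/(A²−A^{−2}), q_i² = (−1)^i A^{i²+2i} and ω_i⁴ = [i+1]². Then the even-indexed terms of the Gauss sum cancel: ∑_{i even, 0 ≤ i ≤ r−2} q_i² ω_i⁴ = 0, and hence Δ := ∑_{i=0}^{r−2} q_i² ω_i⁴ = ∑_{i odd, 1 ≤ i ≤ r−2} q_i² ω_i⁴. -/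
theorem stmt_4 (r : ℕ) (hr : 0 < r) (hre : r % 4 = 0) (A : ℂ)
    (hA : IsPrimitiveRoot A (4 * r)) :
    (∑ i ∈ (Finset.range (r - 1)).filter (fun i => Even i),
        (-1 : ℂ) ^ i * A ^ (i ^ 2 + 2 * i) * (qint A (i + 1)) ^ 2 = 0) ∧
    (∑ i ∈ Finset.range (r - 1),
        (-1 : ℂ) ^ i * A ^ (i ^ 2 + 2 * i) * (qint A (i + 1)) ^ 2 =
      ∑ i ∈ (Finset.range (r - 1)).filter (fun i => Odd i),
        (-1 : ℂ) ^ i * A ^ (i ^ 2 + 2 * i) * (qint A (i + 1)) ^ 2) := by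
  classical
  obtain ⟨k, hk⟩ : 4 ∣ r := Nat.dvd_of_mod_eq_zero hre
  have hr4 : 4 ≤ r := by omega
  have hAne : A ≠ 0 := hA.ne_zero (by positivity)
  have hA4r : A ^ (4 * r) = 1 := hA.pow_eq_one
  have h2r : A ^ (2 * r) = -1 := by
    have h1 : A ^ (2 * r) * A ^ (2 * r) = 1 := by
      rw [← pow_add, show 2 * r + 2 * r = 4 * r by ring]; exact hA4r
    have h2 : A ^ (2 * r) ≠ 1 := hA.pow_ne_one_of_pos_of_lt (by omega) (by omega)
    rcases mul_self_eq_one_iff.mp h1 with h | h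
    · exact absurd h h2
    · exact h
  have hrr : A ^ (r * r) = 1 := by
    have he : r * r = 4 * r * k := by subst hk; ring
    rw [he, pow_mul, hA4r, one_pow]
  -- qint symmetry
  have qeq : ∀ b : ℕ, 1 ≤ b → b ≤ r - 1 → qint A (r - b) = qint A b := by
    intro b hb1 hb2
    unfold qint
    congr 1
    have hy : A ^ (2 * b) ≠ 0 := pow_ne_zero _ hAne
    have hApow : A ^ (2 * (r - b)) = -(A⁻¹ ^ (2 * b)) := by
      have h : A ^ (2 * (r - b)) * A ^ (2 * b) = -1 := by
        rw [← pow_add, show 2 * (r - b) + 2 * b = 2 * r by omega]; exact h2r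
      rw [(eq_div_iff hy).mpr h, inv_pow]
      ring
    have hAipow : A⁻¹ ^ (2 * (r - b)) = -(A ^ (2 * b)) := by
      have hy' : A⁻¹ ^ (2 * b) ≠ 0 := pow_ne_zero _ (inv_ne_zero hAne)
      have h : A⁻¹ ^ (2 * (r - b)) * A⁻¹ ^ (2 * b) = -1 := by
        rw [← pow_add, show 2 * (r - b) + 2 * b = 2 * r by omega, inv_pow, h2r]
        norm_num
      rw [(eq_div_iff hy').mpr h, inv_pow]
      field_simp
    rw [hApow, hAipow]; ring
  -- phase relation
  have phase : ∀ b : ℕ, b ≤ r → A ^ ((r - b) ^ 2) = (-1) ^ b * A ^ (b ^ 2) := by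
    intro b hb
    have hnat : (r - b) ^ 2 + 2 * r * b = r * r + b ^ 2 := by
      have hc : r - b + b = r := by omega
      set c := r - b with hcdef
      rw [← hc]; ring
    have h2rb : A ^ (2 * r * b) = ((-1 : ℂ)) ^ b := by rw [pow_mul, h2r]
    have h : A ^ ((r - b) ^ 2) * ((-1 : ℂ)) ^ b = A ^ (b ^ 2) := by
      calc A ^ ((r - b) ^ 2) * ((-1 : ℂ)) ^ b
          = A ^ ((r - b) ^ 2) * A ^ (2 * r * b) := by rw [h2rb]
        _ = A ^ ((r - b) ^ 2 + 2 * r * b) := by rw [pow_add]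
        _ = A ^ (r * r + b ^ 2) := by rw [hnat]
        _ = A ^ (b ^ 2) := by rw [pow_add, hrr, one_mul]
    have hs : ((-1 : ℂ)) ^ b * ((-1 : ℂ)) ^ b = 1 := by
      rw [← mul_pow]; norm_num
    calc A ^ ((r - b) ^ 2)
        = A ^ ((r - b) ^ 2) * (((-1 : ℂ)) ^ b * ((-1 : ℂ)) ^ b) := by rw [hs, mul_one]
      _ = (A ^ ((r - b) ^ 2) * ((-1 : ℂ)) ^ b) * ((-1 : ℂ)) ^ b := by ring
      _ = (-1) ^ b * A ^ (b ^ 2) := by rw [h]; ring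
  -- key pairing identity for even i
  set f : ℕ → ℂ := fun i => (-1 : ℂ) ^ i * A ^ (i ^ 2 + 2 * i) * (qint A (i + 1)) ^ 2 with hf
  have key : ∀ i, i < r - 1 → Even i → f i + f (r - 2 - i) = 0 := by
    intro i hi hev
    have hj1 : r - 2 - i + 1 = r - (i + 1) := by omega
    have hqj : qint A (r - 2 - i + 1) = qint A (i + 1) := by
      rw [hj1]; exact qeq (i + 1) (by omega) (by omega)
    have hb : i + 1 ≤ r := by omega
    have hph := phase (i + 1) hb
    have hoddb : Odd (i + 1) := hev.add_one
    rw [hoddb.neg_one_pow] at hph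
    -- A ^ ((r - (i+1))^2) = - A ^ ((i+1)^2)
    have hjev : Even (r - 2 - i) := by
      rw [Nat.even_iff] at hev ⊢; omega
    have hAj : A ^ ((r - 2 - i) ^ 2 + 2 * (r - 2 - i)) * A = A ^ ((r - (i + 1)) ^ 2) := by
      rw [← pow_succ]
      congr 1
      have : r - (i + 1) = (r - 2 - i) + 1 := by omega
      rw [this]; ring
    have hAi : A ^ (i ^ 2 + 2 * i) * A = A ^ ((i + 1) ^ 2) := by
      rw [← pow_succ]; congr 1; ring
    have hmain : A ^ ((r - 2 - i) ^ 2 + 2 * (r - 2 - i)) = - A ^ (i ^ 2 + 2 * i) := by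
      have h1 : A ^ ((r - 2 - i) ^ 2 + 2 * (r - 2 - i)) * A
          = (- A ^ (i ^ 2 + 2 * i)) * A := by
        rw [hAj, hph]
        rw [neg_mul, ← hAi]; ring
      exact mul_right_cancel₀ hAne h1
    simp only [hf]
    rw [hev.neg_one_pow, hjev.neg_one_pow, hqj, hmain]
    ring
  have heven : ∑ i ∈ (Finset.range (r - 1)).filter (fun i => Even i), f i = 0 := by
    apply Finset.sum_involution (fun a _ => r - 2 - a)
    · intro a ha
      simp only [Finset.mem_filter, Finset.mem_range] at ha
      exact key a ha.1 ha.2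
    · intro a ha _
      simp only [Finset.mem_filter, Finset.mem_range] at ha
      have hev := ha.2
      rw [Nat.even_iff] at hev
      omega
    · intro a ha
      simp only [Finset.mem_filter, Finset.mem_range] at ha ⊢
      constructor
      · omega
      · have hev := ha.2
        rw [Nat.even_iff] at hev ⊢
        omega
    · intro a ha
      simp only [Finset.mem_filter, Finset.mem_range] at ha
      omega
  constructor
  · exact heven
  · have hsplit := Finset.sum_filter_add_sum_filter_not (Finset.range (r - 1))
      (fun i => Even i) f
    have hodd : (Finset.range (r - 1)).filter (fun i => ¬ Even i)
        = (Finset.range (r - 1)).filter (fun i => Odd i) := by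
      apply Finset.filter_congr
      intro x _
      simp [Nat.not_even_iff_odd]
    rw [hodd, heven, zero_add] at hsplit
    exact hsplit.symm
end

section
/- Let r ≡ 0 (mod 4) and A ∈ ℂ a primitive 4r-th root of unity. Define Δ = ∑_{i=0}^{r−2} (−1)^i [i+1]² A^{i²+2i} and Δ̄ = ∑_{i=0}^{r−2} (−1)^i [i+1]² A^{−(i²+2i)}, where [n] = (A^{2n}−A^{−2n})/(A²−A^{−2}). Then Δ · Δ̄ = −2r/(A² − A^{−2})². -/
open Finset

private lemma shift_sum (F : ℕ → ℂ) (n : ℕ) (hF : ∀ j, F (j + n) = F j) (c : ℕ) :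
    ∑ j ∈ range n, F (j + c) = ∑ j ∈ range n, F j := by
  induction c with
  | zero => simp
  | succ c ih =>
    have h1 : ∑ j ∈ range n, F (j + (c+1)) = ∑ j ∈ range n, F ((j+1) + c) := by
      apply sum_congr rfl; intro j _; congr 1; omega
    have key : (∑ j ∈ range n, F ((j+1) + c)) + F (0 + c) =
        (∑ j ∈ range n, F (j + c)) + F (n + c) := by
      rw [← Finset.sum_range_succ' (fun j => F (j + c)) n,
        Finset.sum_range_succ (fun j => F (j + c)) n]
    have h2 : F (n + c) = F (0 + c) := by
      rw [add_comm n c, hF, zero_add]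
    rw [h1]
    have := key.trans (by rw [h2])
    have h3 : ∑ j ∈ range n, F ((j+1) + c) = ∑ j ∈ range n, F (j + c) :=
      add_right_cancel this
    rw [h3, ih]

section main
variable {r : ℕ} {A : ℂ}

private lemma pow_cong (hr : 0 < r) (hA : IsPrimitiveRoot A (4*r)) {a b : ℤ}
    (h : (4 * (r:ℤ)) ∣ (a - b)) : A ^ a = A ^ b := by
  have hA0 : A ≠ 0 := hA.ne_zero (by omega)
  have h1 : A ^ ((4:ℤ) * r) = 1 := by
    rw [show ((4:ℤ) * r) = ((4*r : ℕ) : ℤ) by push_cast; try ring, zpow_natCast, hA.pow_eq_one]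
  obtain ⟨k, hk⟩ := h
  have ha : a = b + 4 * (r:ℤ) * k := by linarith
  rw [ha, zpow_add₀ hA0, zpow_mul, h1, one_zpow, mul_one]

private lemma h2r (hr : 0 < r) (hA : IsPrimitiveRoot A (4*r)) : A ^ (2 * (r:ℤ)) = -1 := by
  have hA0 : A ≠ 0 := hA.ne_zero (by omega)
  have hsq : (A ^ (2*(r:ℤ)))^2 = 1 := by
    rw [← zpow_natCast (A ^ (2*(r:ℤ))) 2, ← zpow_mul,
      show (2*(r:ℤ)) * ((2:ℕ):ℤ) = ((4*r:ℕ):ℤ) by push_cast; try ring,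
      zpow_natCast, hA.pow_eq_one]
  have hne : A ^ (2*(r:ℤ)) ≠ 1 := by
    intro h
    rw [show (2*(r:ℤ)) = ((2*r:ℕ):ℤ) by push_cast; try ring, zpow_natCast,
      hA.pow_eq_one_iff_dvd] at h
    have := Nat.le_of_dvd (by omega) h
    omega
  have hfac : (A ^ (2*(r:ℤ)) - 1) * (A ^ (2*(r:ℤ)) + 1) = 0 := by
    linear_combination hsq
  rcases mul_eq_zero.mp hfac with h | h
  · exact absurd (sub_eq_zero.mp h) hne
  · exact eq_neg_of_add_eq_zero_left h

private lemma hD_ne (hr : 0 < r) (hre : r % 4 = 0) (hA : IsPrimitiveRoot A (4*r)) :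
    A ^ 2 - A⁻¹ ^ 2 ≠ 0 := by
  have hA0 : A ≠ 0 := hA.ne_zero (by omega)
  intro h
  have h2 : A ^ 2 = A⁻¹ ^ 2 := sub_eq_zero.mp h
  have h4 : A ^ 4 = 1 := by
    have h5 : A⁻¹ ^ 2 * A ^ 2 = 1 := by
      rw [← mul_pow, inv_mul_cancel₀ hA0, one_pow]
    calc A ^ 4 = A ^ 2 * A ^ 2 := by ring
      _ = A⁻¹ ^ 2 * A ^ 2 := by rw [← h2]
      _ = 1 := h5
  have := Nat.le_of_dvd (by norm_num) ((hA.pow_eq_one_iff_dvd 4).mp h4)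
  omega

private lemma master (hr : 0 < r) (hre : r % 4 = 0) (hA : IsPrimitiveRoot A (4*r)) :
    (A ^ 2 - A⁻¹ ^ 2)^2 *
      ∑ i ∈ range (r-1), (-1:ℂ)^i * (qint A (i+1))^2 * A^(i^2+2*i)
    = (A ^ (-1:ℤ) - A ^ (-5:ℤ)) * ∑ j ∈ range (2*r), A ^ ((j:ℤ)^2) := by
  have hr4 : 4 ≤ r := by omega
  obtain ⟨m, hm⟩ : ∃ m, r = 4*m := ⟨r/4, by omega⟩
  have hA0 : A ≠ 0 := hA.ne_zero (by omega)
  have hD := hD_ne hr hre hA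
  have h2 := h2r hr hA
  have hmul : ∀ a b : ℤ, A ^ a * A ^ b = A ^ (a+b) := fun a b => (zpow_add₀ hA0 a b).symm
  set w : ℕ → ℂ := fun j => (A ^ (4*(j:ℤ)) - 2 + A ^ (-(4*(j:ℤ)))) * A ^ (((j:ℤ) + r)^2)
    with hw
  set F : ℕ → ℂ := fun n => A ^ ((n:ℤ)^2) with hF
  -- Step A : per-term identity
  have hq2 : ∀ i : ℕ, (A ^ 2 - A⁻¹ ^ 2)^2 * (qint A (i+1))^2
      = A ^ (4*((i:ℤ)+1)) - 2 + A ^ (-(4*((i:ℤ)+1))) := by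
    intro i
    have e1 : (A:ℂ)^(2*(i+1)) = A ^ ((2:ℤ)*((i:ℤ)+1)) := by
      rw [← zpow_natCast]; congr 1; try push_cast; try ring
    have e2 : (A⁻¹:ℂ)^(2*(i+1)) = A ^ (-((2:ℤ)*((i:ℤ)+1))) := by
      rw [inv_pow, ← zpow_natCast, ← zpow_neg]; congr 1; try push_cast; try ring
    have p1 : (A ^ ((2:ℤ)*((i:ℤ)+1)))^(2:ℕ) = A ^ (4*((i:ℤ)+1)) := by
      rw [← zpow_natCast (A ^ ((2:ℤ)*((i:ℤ)+1))) 2, ← zpow_mul]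
      congr 1; try push_cast; try ring
    have p2 : (A ^ (-((2:ℤ)*((i:ℤ)+1))))^(2:ℕ) = A ^ (-(4*((i:ℤ)+1))) := by
      rw [← zpow_natCast (A ^ (-((2:ℤ)*((i:ℤ)+1)))) 2, ← zpow_mul]
      congr 1; try push_cast; try ring
    have p3 : A ^ ((2:ℤ)*((i:ℤ)+1)) * A ^ (-((2:ℤ)*((i:ℤ)+1))) = 1 := by
      rw [hmul, add_neg_cancel, zpow_zero]
    simp only [qint, div_pow]
    rw [mul_comm, div_mul_cancel₀ _ (pow_ne_zero 2 hD), e1, e2, sub_sq, p1, p2,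
      mul_assoc 2 (A ^ ((2:ℤ)*((i:ℤ)+1))) (A ^ (-((2:ℤ)*((i:ℤ)+1)))), p3, mul_one]
  have stepA : ∀ i : ℕ, (A ^ 2 - A⁻¹ ^ 2)^2 * ((-1:ℂ)^i * (qint A (i+1))^2 * A^(i^2+2*i))
      = -(A ^ (-1:ℤ)) * w (i+1) := by
    intro i
    have e3 : (A:ℂ)^(i^2+2*i) = A ^ ((i:ℤ)^2 + 2*i) := by
      rw [← zpow_natCast]; congr 1; try push_cast; try ring
    have e4 : ((-1:ℂ))^i = A ^ (2*(r:ℤ)*i) := by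
      rw [← h2, ← zpow_natCast (A ^ (2*(r:ℤ))) i, ← zpow_mul]
    have lhs_eq : (A ^ 2 - A⁻¹ ^ 2)^2 * ((-1:ℂ)^i * (qint A (i+1))^2 * A^(i^2+2*i))
        = A ^ (2*(r:ℤ)*i + ((i:ℤ)^2 + 2*i)) *
            (A ^ (4*((i:ℤ)+1)) - 2 + A ^ (-(4*((i:ℤ)+1)))) := by
      rw [e3, e4]
      calc (A ^ 2 - A⁻¹ ^ 2)^2 * (A ^ (2*(r:ℤ)*i) * (qint A (i+1))^2 * A ^ ((i:ℤ)^2 + 2*i))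
          = (A ^ (2*(r:ℤ)*i) * A ^ ((i:ℤ)^2 + 2*i)) *
              ((A ^ 2 - A⁻¹ ^ 2)^2 * (qint A (i+1))^2) := by ring
        _ = _ := by rw [hq2 i, hmul]
    have rhs_eq : -(A ^ (-1:ℤ)) * w (i+1)
        = A ^ (2*(r:ℤ) + -1 + (((i:ℤ)+1) + r)^2) *
            (A ^ (4*((i:ℤ)+1)) - 2 + A ^ (-(4*((i:ℤ)+1)))) := by
      simp only [hw]
      have : -(A ^ (-1:ℤ)) = A ^ (2*(r:ℤ)) * A ^ (-1:ℤ) := by rw [h2]; ring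
      rw [this, hmul]
      have hcast : (((i+1:ℕ):ℤ)) = (i:ℤ)+1 := by push_cast; try ring
      rw [hcast]
      rw [show A ^ (2*(r:ℤ) + -1) * ((A ^ (4*((i:ℤ)+1)) - 2 + A ^ (-(4*((i:ℤ)+1)))) *
          A ^ ((((i:ℤ)+1) + r)^2)) = (A ^ (2*(r:ℤ) + -1) * A ^ ((((i:ℤ)+1) + r)^2)) *
          (A ^ (4*((i:ℤ)+1)) - 2 + A ^ (-(4*((i:ℤ)+1)))) by ring, hmul]
    rw [lhs_eq, rhs_eq]
    congr 1
    apply pow_cong hr hA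
    refine ⟨-1 - m, ?_⟩
    have : (r:ℤ) = 4*m := by exact_mod_cast hm
    rw [this]; ring
  -- Step B : symmetrization
  have w0 : w 0 = 0 := by
    simp only [hw]
    norm_num
  have hz4r : A ^ (4*(r:ℤ)) = 1 := by
    rw [show (4*(r:ℤ)) = ((4*r : ℕ) : ℤ) by push_cast; try ring, zpow_natCast, hA.pow_eq_one]
  have wr : w r = 0 := by
    simp only [hw]
    rw [hz4r, zpow_neg, hz4r, inv_one]
    norm_num
  have wrefl : ∀ j : ℕ, j ≤ r → w (r + j) = w (r - j) := by
    intro j hj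
    have hcast : (((r - j:ℕ)):ℤ) = (r:ℤ) - j := by
      have := Nat.cast_sub hj (R := ℤ); exact this
    have hcast2 : (((r + j:ℕ)):ℤ) = (r:ℤ) + j := by push_cast; try ring
    simp only [hw, hcast, hcast2]
    have hc1 : A ^ (4*((r:ℤ)+j)) = A ^ (-(4*((r:ℤ)-j))) :=
      pow_cong hr hA ⟨2, by ring⟩
    have hc2 : A ^ (-(4*((r:ℤ)+j))) = A ^ (4*((r:ℤ)-j)) :=
      pow_cong hr hA ⟨-2, by ring⟩
    have hc3 : A ^ ((((r:ℤ)+j) + r)^2) = A ^ ((((r:ℤ)-j) + r)^2) :=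
      pow_cong hr hA ⟨2*j, by ring⟩
    rw [hc1, hc2, hc3]; ring
  have hB1 : ∑ j ∈ range r, w j = ∑ i ∈ range (r-1), w (i+1) := by
    rw [show range r = range ((r-1)+1) from by congr 1; omega,
      Finset.sum_range_succ' w (r-1), w0, add_zero]
  have hB2 : ∑ j ∈ range r, w (r + j) = ∑ i ∈ range (r-1), w (i+1) := by
    have h1 : ∑ j ∈ range r, w (r+j) = ∑ j ∈ range r, w (r - j) :=
      sum_congr rfl (fun j hj => wrefl j (le_of_lt (mem_range.mp hj)))
    have h2 : ∑ j ∈ range r, w (r - (r-1-j)) = ∑ j ∈ range r, w (r - j) :=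
      Finset.sum_range_reflect (fun j => w (r-j)) r
    have h3 : ∑ j ∈ range r, w (r - (r-1-j)) = ∑ j ∈ range r, w (j+1) :=
      sum_congr rfl (fun j hj => by
        have := mem_range.mp hj; congr 1; omega)
    have h4 : ∑ j ∈ range r, w (j+1) = (∑ i ∈ range (r-1), w (i+1)) + w r := by
      rw [show range r = range ((r-1)+1) from by congr 1; omega,
        Finset.sum_range_succ (fun j => w (j+1)) (r-1),
        show (r-1)+1 = r from by omega]
    rw [h1, ← h2, h3, h4, wr, add_zero]
  have hsplit : ∑ j ∈ range (2*r), w j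
      = 2 * ∑ i ∈ range (r-1), w (i+1) := by
    rw [two_mul r, Finset.sum_range_add w r r, hB1, hB2]; ring
  -- Step C : evaluate W in terms of H
  have hFper : ∀ j, F (j + 2*r) = F j := by
    intro j
    simp only [hF]
    apply pow_cong hr hA
    refine ⟨(j:ℤ) + r, ?_⟩
    push_cast; try ring
  have hterm : ∀ j : ℕ, w j
      = A^(-4:ℤ) * F (j + (r+2)) + A^(-4:ℤ) * F (j + (r-2)) - 2 * F (j + r) := by
    intro j
    have c1 : A ^ (4*(j:ℤ)) * A ^ (((j:ℤ) + r)^2) = A^(-4:ℤ) * F (j + (r+2)) := by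
      simp only [hF]
      rw [hmul, hmul]
      apply pow_cong hr hA
      refine ⟨-1, ?_⟩
      push_cast; try ring
    have c2 : A ^ (-(4*(j:ℤ))) * A ^ (((j:ℤ) + r)^2) = A^(-4:ℤ) * F (j + (r-2)) := by
      simp only [hF]
      rw [hmul, hmul]
      apply pow_cong hr hA
      refine ⟨1, ?_⟩
      have hcast : ((j + (r-2) : ℕ) : ℤ) = (j:ℤ) + r - 2 := by
        have h2r' : 2 ≤ r := by omega
        push_cast [Nat.cast_sub h2r']; ring
      rw [hcast]; ring
    have c3 : A ^ (((j:ℤ) + r)^2) = F (j + r) := by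
      simp only [hF]; congr 1; try push_cast; try ring
    simp only [hw]
    calc (A ^ (4*(j:ℤ)) - 2 + A ^ (-(4*(j:ℤ)))) * A ^ (((j:ℤ) + r)^2)
        = A ^ (4*(j:ℤ)) * A ^ (((j:ℤ) + r)^2)
          + A ^ (-(4*(j:ℤ))) * A ^ (((j:ℤ) + r)^2)
          - 2 * A ^ (((j:ℤ) + r)^2) := by ring
      _ = _ := by rw [c1, c2, c3]
  have hW : ∑ j ∈ range (2*r), w j
      = (2 * A^(-4:ℤ) - 2) * ∑ j ∈ range (2*r), F j := by
    calc ∑ j ∈ range (2*r), w j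
        = ∑ j ∈ range (2*r),
            (A^(-4:ℤ) * F (j + (r+2)) + A^(-4:ℤ) * F (j + (r-2)) - 2 * F (j + r)) :=
          sum_congr rfl (fun j _ => hterm j)
      _ = A^(-4:ℤ) * (∑ j ∈ range (2*r), F (j + (r+2)))
          + A^(-4:ℤ) * (∑ j ∈ range (2*r), F (j + (r-2)))
          - 2 * (∑ j ∈ range (2*r), F (j + r)) := by
          rw [Finset.sum_sub_distrib, Finset.sum_add_distrib, ← Finset.mul_sum,
            ← Finset.mul_sum, ← Finset.mul_sum]
      _ = (2 * A^(-4:ℤ) - 2) * ∑ j ∈ range (2*r), F j := by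
          rw [shift_sum F (2*r) hFper (r+2), shift_sum F (2*r) hFper (r-2),
            shift_sum F (2*r) hFper r]
          ring
  -- Assemble
  have main2 : 2 * ((A ^ 2 - A⁻¹ ^ 2)^2 *
      ∑ i ∈ range (r-1), (-1:ℂ)^i * (qint A (i+1))^2 * A^(i^2+2*i))
      = 2 * ((A ^ (-1:ℤ) - A ^ (-5:ℤ)) * ∑ j ∈ range (2*r), F j) := by
    rw [Finset.mul_sum]
    rw [sum_congr rfl (fun i _ => stepA i)]
    rw [← Finset.mul_sum]
    calc 2 * (-(A ^ (-1:ℤ)) * ∑ i ∈ range (r-1), w (i+1))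
        = -(A ^ (-1:ℤ)) * (2 * ∑ i ∈ range (r-1), w (i+1)) := by ring
      _ = -(A ^ (-1:ℤ)) * ((2 * A^(-4:ℤ) - 2) * ∑ j ∈ range (2*r), F j) := by
          rw [← hsplit, hW]
      _ = _ := by
          have h5 : A ^ (-1:ℤ) * A ^ (-4:ℤ) = A ^ (-5:ℤ) := by
            rw [hmul]; norm_num
          calc -(A ^ (-1:ℤ)) * ((2 * A^(-4:ℤ) - 2) * ∑ j ∈ range (2*r), F j)
              = (2 * A ^ (-1:ℤ) - 2 * (A ^ (-1:ℤ) * A ^ (-4:ℤ))) *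
                  ∑ j ∈ range (2*r), F j := by ring
            _ = _ := by rw [h5]; ring
  have := mul_left_cancel₀ (two_ne_zero (α := ℂ)) main2
  simpa [hF] using this

private lemma HHbar (hr : 0 < r) (hA : IsPrimitiveRoot A (4*r)) :
    (∑ j ∈ range (2*r), A ^ ((j:ℤ)^2)) * (∑ k ∈ range (2*r), (A⁻¹) ^ ((k:ℤ)^2))
      = 2 * (r:ℂ) := by
  have hA0 : A ≠ 0 := hA.ne_zero (by omega)
  have hmul : ∀ a b : ℤ, A ^ a * A ^ b = A ^ (a+b) := fun a b => (zpow_add₀ hA0 a b).symm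
  have hinv : ∀ z : ℤ, (A⁻¹) ^ z = A ^ (-z) := fun z => by rw [inv_zpow, ← zpow_neg]
  simp only [hinv]
  rw [Finset.sum_mul_sum]
  have h1 : ∀ j k : ℕ, A ^ ((j:ℤ)^2) * A ^ (-((k:ℤ)^2)) = A ^ ((j:ℤ)^2 - (k:ℤ)^2) := by
    intro j k; rw [hmul]; congr 1; try ring
  simp_rw [h1]
  rw [Finset.sum_comm]
  have h2 : ∀ k : ℕ, ∑ j ∈ range (2*r), A ^ ((j:ℤ)^2 - (k:ℤ)^2)
      = ∑ t ∈ range (2*r), A ^ ((t:ℤ)^2) * (A ^ (2*(t:ℤ)))^k := by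
    intro k
    have hper : ∀ j, (fun j : ℕ => A ^ ((j:ℤ)^2 - (k:ℤ)^2)) (j + 2*r)
        = (fun j : ℕ => A ^ ((j:ℤ)^2 - (k:ℤ)^2)) j := by
      intro j
      apply pow_cong hr hA
      refine ⟨(j:ℤ) + r, ?_⟩
      push_cast; try ring
    rw [← shift_sum (fun j : ℕ => A ^ ((j:ℤ)^2 - (k:ℤ)^2)) (2*r) hper k]
    apply sum_congr rfl
    intro t _
    rw [← zpow_natCast (A ^ (2*(t:ℤ))) k, ← zpow_mul, hmul]
    congr 1
    push_cast; try ring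
  simp_rw [h2]
  rw [Finset.sum_comm]
  have h3 : ∀ t : ℕ, ∑ k ∈ range (2*r), A ^ ((t:ℤ)^2) * (A ^ (2*(t:ℤ)))^k
      = A ^ ((t:ℤ)^2) * ∑ k ∈ range (2*r), (A ^ (2*(t:ℤ)))^k := fun t =>
    (Finset.mul_sum _ _ _).symm
  simp_rw [h3]
  rw [Finset.sum_eq_single 0]
  · norm_num
  · intro t ht htne
    have ht' := mem_range.mp ht
    have hx1 : A ^ (2*(t:ℤ)) ≠ 1 := by
      intro h
      rw [show (2*(t:ℤ)) = ((2*t:ℕ):ℤ) by push_cast; try ring, zpow_natCast,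
        hA.pow_eq_one_iff_dvd] at h
      have := Nat.le_of_dvd (by omega) h
      omega
    have hx2 : (A ^ (2*(t:ℤ)))^(2*r) = 1 := by
      rw [← zpow_natCast (A ^ (2*(t:ℤ))) (2*r), ← zpow_mul,
        show (2*(t:ℤ)) * ((2*r:ℕ):ℤ) = ((4*r:ℕ):ℤ) * t by push_cast; try ring,
        zpow_mul, zpow_natCast, zpow_natCast, hA.pow_eq_one, one_pow]
    rw [geom_sum_eq hx1, hx2, sub_self, zero_div, mul_zero]
  · intro h
    exact absurd (mem_range.mpr (by omega)) h

end main

theorem stmt_5 (r : ℕ) (hr : 0 < r) (hre : r % 4 = 0) (A : ℂ)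
    (hA : IsPrimitiveRoot A (4 * r)) :
    (∑ i ∈ Finset.range (r - 1),
        (-1 : ℂ) ^ i * (qint A (i + 1)) ^ 2 * A ^ (i ^ 2 + 2 * i)) *
    (∑ i ∈ Finset.range (r - 1),
        (-1 : ℂ) ^ i * (qint A (i + 1)) ^ 2 * A⁻¹ ^ (i ^ 2 + 2 * i)) =
      (-2 * (r : ℂ)) / (A ^ 2 - A⁻¹ ^ 2) ^ 2 := by
  have hr4 : 4 ≤ r := by omega
  have hA0 : A ≠ 0 := hA.ne_zero (by omega)
  have hAi : IsPrimitiveRoot A⁻¹ (4*r) := hA.inv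
  have hD := hD_ne hr hre hA
  have hqi : ∀ n : ℕ, qint A⁻¹ n = qint A n := by
    intro n
    simp only [qint, inv_inv]
    rw [show A⁻¹^(2*n) - A^(2*n) = -(A^(2*n) - A⁻¹^(2*n)) by ring,
      show A⁻¹^2 - A^2 = -(A^2 - A⁻¹^2) by ring, neg_div_neg_eq]
  have h1 := master hr hre hA
  have h2 := master hr hre hAi
  simp only [hqi, inv_inv] at h2
  have hsq : (A⁻¹ ^ 2 - A ^ 2)^2 = (A ^ 2 - A⁻¹ ^ 2)^2 := by ring
  rw [hsq] at h2
  have hHH := HHbar hr hA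
  set Δ₁ := ∑ i ∈ Finset.range (r-1), (-1:ℂ)^i * (qint A (i+1))^2 * A^(i^2+2*i) with hd1
  set Δ₂ := ∑ i ∈ Finset.range (r-1), (-1:ℂ)^i * (qint A (i+1))^2 * A⁻¹^(i^2+2*i) with hd2
  set H₁ := ∑ j ∈ Finset.range (2*r), A ^ ((j:ℤ)^2) with hh1
  set H₂ := ∑ j ∈ Finset.range (2*r), (A⁻¹) ^ ((j:ℤ)^2) with hh2
  have hc : (A ^ (-1:ℤ) - A ^ (-5:ℤ)) * ((A⁻¹) ^ (-1:ℤ) - (A⁻¹) ^ (-5:ℤ))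
      = -((A ^ 2 - A⁻¹ ^ 2)^2) := by
    have hinv : ∀ z : ℤ, (A⁻¹) ^ z = A ^ (-z) := fun z => by rw [inv_zpow, ← zpow_neg]
    have hmul2 : ∀ a b : ℤ, A ^ a * A ^ b = A ^ (a+b) := fun a b =>
      (zpow_add₀ hA0 a b).symm
    calc (A ^ (-1:ℤ) - A ^ (-5:ℤ)) * ((A⁻¹) ^ (-1:ℤ) - (A⁻¹) ^ (-5:ℤ))
        = (A ^ (-1:ℤ) - A ^ (-5:ℤ)) * (A ^ (1:ℤ) - A ^ (5:ℤ)) := by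
          rw [hinv, hinv]; norm_num
      _ = A ^ ((-1:ℤ)+1) - A ^ ((-1:ℤ)+5) - (A ^ ((-5:ℤ)+1) - A ^ ((-5:ℤ)+5)) := by
          rw [← hmul2, ← hmul2, ← hmul2, ← hmul2]; ring
      _ = 2 - A ^ (4:ℤ) - A ^ (-4:ℤ) := by norm_num; ring
      _ = -((A ^ 2 - A⁻¹ ^ 2)^2) := by
          have e1 : (A:ℂ) ^ (4:ℤ) = A ^ (4:ℕ) := by
            rw [show (4:ℤ) = ((4:ℕ):ℤ) from by norm_num, zpow_natCast]
          have e2 : (A:ℂ) ^ (-4:ℤ) = (A ^ (4:ℕ))⁻¹ := by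
            rw [show (-4:ℤ) = -((4:ℕ):ℤ) from by norm_num, zpow_neg, zpow_natCast]
          rw [e1, e2]
          field_simp
          ring
  have final : Δ₁ * Δ₂ * (A ^ 2 - A⁻¹ ^ 2)^2 = -2*(r:ℂ) := by
    apply mul_left_cancel₀ (pow_ne_zero 2 hD)
    calc (A ^ 2 - A⁻¹ ^ 2)^2 * (Δ₁ * Δ₂ * (A ^ 2 - A⁻¹ ^ 2)^2)
        = ((A ^ 2 - A⁻¹ ^ 2)^2 * Δ₁) * ((A ^ 2 - A⁻¹ ^ 2)^2 * Δ₂) := by ring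
      _ = ((A ^ (-1:ℤ) - A ^ (-5:ℤ)) * H₁) * (((A⁻¹) ^ (-1:ℤ) - (A⁻¹) ^ (-5:ℤ)) * H₂) := by
          rw [h1, h2]
      _ = ((A ^ (-1:ℤ) - A ^ (-5:ℤ)) * ((A⁻¹) ^ (-1:ℤ) - (A⁻¹) ^ (-5:ℤ))) * (H₁ * H₂) := by
          ring
      _ = -((A ^ 2 - A⁻¹ ^ 2)^2) * (2*(r:ℂ)) := by rw [hc, hHH]
      _ = (A ^ 2 - A⁻¹ ^ 2)^2 * (-2*(r:ℂ)) := by ring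
  rw [eq_div_iff (pow_ne_zero 2 hD)]
  exact final
end

section
/- Let r ≥ 4 be even and A a primitive 4r-th root of unity, [n] = (A^{2n}−A^{−2n})/(A²−A^{−2}). Then for every integer m with 1 ≤ m ≤ r−1: ∑_{n odd, 1 ≤ n ≤ r−1} [n]·[nm] = (−r/(A²−A^{−2})²) · (δ_{m,1} + δ_{m,r−1}); i.e., the sum vanishes unless m = 1 or m = r−1, in which cases it equals −r/(A²−A^{−2})². -/
open Finset

theorem sum_filter_odd_Icc {M : Type*} [AddCommMonoid M] (f : ℕ → M) (s : ℕ) :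
    ∑ n ∈ (Icc 1 (2 * s - 1)).filter Odd, f n = ∑ j ∈ range s, f (2 * j + 1) := by
  have himage : (Icc 1 (2 * s - 1)).filter Odd = (range s).image (fun j => 2 * j + 1) := by
    ext n
    simp only [mem_filter, mem_Icc, mem_image, mem_range, Nat.odd_iff]
    constructor
    · rintro ⟨⟨hn1, hn2⟩, hodd⟩
      exact ⟨n / 2, by omega, by omega⟩
    · rintro ⟨j, hj, rfl⟩
      omega
  rw [himage, sum_image fun a _ b _ hab => by omega]

section OddPowSum

variable {K : Type*} [Field K]

/-- `∑ (x ^ n + x⁻¹ ^ n)` over the odd `n` with `0 < n < 2 * s`. -/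
def oddPowSum (x : K) (s : ℕ) : K :=
  ∑ j ∈ range s, (x ^ (2 * j + 1) + x⁻¹ ^ (2 * j + 1))

theorem oddPowSum_one (s : ℕ) : oddPowSum (1 : K) s = 2 * s := by
  simp only [oddPowSum, inv_one, one_pow, sum_const, card_range, nsmul_eq_mul]
  ring

theorem oddPowSum_neg_one (s : ℕ) : oddPowSum (-1 : K) s = -(2 * s) := by
  have hodd (j : ℕ) : (-1 : K) ^ (2 * j + 1) = -1 := Odd.neg_one_pow ⟨j, rfl⟩
  simp only [oddPowSum, inv_neg, inv_one, hodd, sum_const, card_range, nsmul_eq_mul]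
  ring

theorem sq_sub_one_mul_oddPowSum {x : K} (hx : x ≠ 0) (s : ℕ) :
    (x ^ 2 - 1) * oddPowSum x s = x * (x ^ (2 * s) - x⁻¹ ^ (2 * s)) := by
  induction s with
  | zero => simp [oddPowSum]
  | succ s ih =>
    rw [oddPowSum, sum_range_succ, mul_add, ← oddPowSum, ih]
    simp only [inv_pow]
    field_simp
    ring

theorem IsPrimitiveRoot.oddPowSum_pow_eq_zero {ζ : K} {s k : ℕ}
    (hζ : IsPrimitiveRoot ζ (4 * s)) (hk0 : 0 < k) (hk : k < 2 * s) :
    oddPowSum (ζ ^ k) s = 0 := by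
  have hx : ζ ^ k ≠ 0 := pow_ne_zero _ (hζ.ne_zero (by omega))
  have hsq : (ζ ^ k) ^ 2 - 1 ≠ 0 := by
    rw [← pow_mul, sub_ne_zero]
    exact hζ.pow_ne_one_of_pos_of_lt (by omega) (by omega)
  have hsym : (ζ ^ k) ^ (2 * s) = (ζ ^ k)⁻¹ ^ (2 * s) := by
    rw [inv_pow]
    refine eq_inv_of_mul_eq_one_left ?_
    rw [← pow_add, ← pow_mul, mul_comm, show (2 * s + 2 * s) * k = 4 * s * k by ring, pow_mul,
      hζ.pow_eq_one, one_pow]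
  have h := sq_sub_one_mul_oddPowSum hx s
  rw [hsym, sub_self, mul_zero] at h
  exact (mul_eq_zero.mp h).resolve_left hsq

theorem sub_inv_mul_pow_sub_inv_pow {y : K} (hy : y ≠ 0) (m : ℕ) :
    (y - y⁻¹) * (y ^ (m + 1) - y⁻¹ ^ (m + 1)) =
      (y ^ (m + 2) + y⁻¹ ^ (m + 2)) - (y ^ m + y⁻¹ ^ m) := by
  simp only [inv_pow]
  field_simp
  ring

end OddPowSum

theorem qint_eq (A : ℂ) (n : ℕ) :
    qint A n = ((A ^ 2) ^ n - (A ^ 2)⁻¹ ^ n) / (A ^ 2 - (A ^ 2)⁻¹) := by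
  rw [qint, pow_mul, pow_mul, inv_pow]

theorem sum_filter_odd_qint_mul_qint {A : ℂ} (hA : A ≠ 0) (s m : ℕ) :
    ∑ n ∈ (Icc 1 (2 * s - 1)).filter Odd, qint A n * qint A (n * (m + 1)) =
      (oddPowSum ((A ^ 2) ^ (m + 2)) s - oddPowSum ((A ^ 2) ^ m) s) /
        (A ^ 2 - A⁻¹ ^ 2) ^ 2 := by
  have hterm (n : ℕ) : qint A n * qint A (n * (m + 1)) =
      (((A ^ 2) ^ (m + 2)) ^ n + ((A ^ 2) ^ (m + 2))⁻¹ ^ n -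
        (((A ^ 2) ^ m) ^ n + ((A ^ 2) ^ m)⁻¹ ^ n)) / (A ^ 2 - A⁻¹ ^ 2) ^ 2 := by
    rw [qint_eq, qint_eq, div_mul_div_comm, ← sq, inv_pow A 2, pow_mul (A ^ 2) n,
      pow_mul (A ^ 2)⁻¹ n, inv_pow (A ^ 2) n,
      sub_inv_mul_pow_sub_inv_pow (pow_ne_zero _ (pow_ne_zero _ hA))]
    ring
  simp only [hterm, sum_filter_odd_Icc, ← sum_div, oddPowSum, ← sum_sub_distrib]

theorem stmt_6 (r : ℕ) (hr : 4 ≤ r) (hre : Even r) (A : ℂ)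
    (hA : IsPrimitiveRoot A (4 * r)) (m : ℕ) (hm1 : 1 ≤ m) (hm2 : m ≤ r - 1) :
    ∑ n ∈ (Finset.Icc 1 (r - 1)).filter (fun n => Odd n), qint A n * qint A (n * m) =
      (-(r : ℂ) / (A ^ 2 - A⁻¹ ^ 2) ^ 2) *
        ((if m = 1 then (1 : ℂ) else 0) + (if m = r - 1 then (1 : ℂ) else 0)) := by
  obtain ⟨s, rfl⟩ := hre.two_dvd
  obtain ⟨k, rfl⟩ : ∃ k, m = k + 1 := ⟨m - 1, by omega⟩
  have hq : IsPrimitiveRoot (A ^ 2) (4 * s) := hA.pow (by omega) (by ring)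
  have hq_half : (A ^ 2) ^ (2 * s) = -1 :=
    (hq.pow (by omega) (by ring) : IsPrimitiveRoot _ 2).eq_neg_one_of_two_right
  rw [sum_filter_odd_qint_mul_qint (hA.ne_zero (by omega))]
  by_cases hk1 : k = 0
  · subst hk1
    rw [hq.oddPowSum_pow_eq_zero (by omega) (by omega), pow_zero, oddPowSum_one,
      if_pos rfl, if_neg (by omega)]
    push_cast
    ring
  by_cases hk2 : k + 2 = 2 * s
  · rw [hk2, hq_half, oddPowSum_neg_one, hq.oddPowSum_pow_eq_zero (by omega) (by omega),
      if_neg (by omega), if_pos (by omega)]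
    push_cast
    ring
  rw [hq.oddPowSum_pow_eq_zero (by omega) (by omega),
    hq.oddPowSum_pow_eq_zero (by omega) (by omega), if_neg (by omega), if_neg (by omega)]
  ring
end

section
/- Let B be a symmetric m×m matrix over the field 𝔽₂ and let d ∈ 𝔽₂^m be its diagonal vector, d_i = B_{ii}. Then the linear system B c = d has a solution c ∈ 𝔽₂^m. (In topological terms: every framed link L admits a characteristic sublink K, i.e. a sublink with L_i · K = L_i · L_i mod 2 for all components L_i.) -/
/-!
Over `𝔽₂` the quadratic form `x ↦ xᵀ B x` of a symmetric `B` is linear: the off-diagonal terms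
`B i j * x i * x j` and `B j i * x j * x i` cancel, and `x i ^ 2 = x i`, so `xᵀ B x = x ⬝ᵥ d`.
Hence `xᵀ B = 0` forces `x ⬝ᵥ d = 0`: the diagonal is orthogonal to the left kernel of `B`,
which over a field means it lies in the column space.
-/

open Finset Matrix

namespace CharTwo

variable {R α : Type*} [CommRing R] [CharP R 2]

theorem sum_sum_eq_sum_diag_of_symm [DecidableEq α] (s : Finset α) {f : α → α → R}
    (hf : ∀ i j, f i j = f j i) : ∑ i ∈ s, ∑ j ∈ s, f i j = ∑ i ∈ s, f i i := by
  induction s using Finset.induction_on with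
  | empty => simp
  | insert a s ha ih =>
    simp only [sum_insert ha, sum_add_distrib, ih, sum_congr rfl fun i _ => hf i a]
    linear_combination add_self_eq_zero (∑ j ∈ s, f a j)

end CharTwo

theorem Matrix.IsSymm.dotProduct_mulVec_self_of_charTwo {R n : Type*} [CommRing R] [CharP R 2]
    [Fintype n] {B : Matrix n n R} (hB : B.IsSymm) (x : n → R) :
    x ⬝ᵥ B *ᵥ x = ∑ i, B i i * x i ^ 2 := by
  classical
  simp only [dotProduct, mulVec, mul_sum]
  rw [CharTwo.sum_sum_eq_sum_diag_of_symm]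
  · exact sum_congr rfl fun i _ => by ring
  · intro i j; rw [hB.apply i j]; ring

theorem Matrix.exists_mulVec_eq_of_forall_vecMul_eq_zero {K m n : Type*} [Field K] [Fintype m]
    [Fintype n] {A : Matrix m n K} {v : m → K}
    (hv : ∀ x, x ᵥ* A = 0 → x ⬝ᵥ v = 0) : ∃ c, A *ᵥ c = v := by
  classical
  by_contra! hc
  obtain ⟨f, hfv, hf⟩ := (LinearMap.range A.mulVecLin).exists_dual_map_eq_bot_of_notMem
    (x := v) (by simpa using hc) inferInstance
  set x := (dotProductEquiv K m).symm f
  have hf_eq : ∀ w, f w = x ⬝ᵥ w := fun w => by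
    rw [← dotProductEquiv_apply_apply, LinearEquiv.apply_symm_apply]
  have hxA : x ᵥ* A = 0 := by
    have hfA : ∀ c, f (A *ᵥ c) = 0 := fun c =>
      (Submodule.mem_bot K).mp (hf ▸ Submodule.mem_map_of_mem (LinearMap.mem_range_self _ c))
    ext j
    rw [Pi.zero_apply, ← dotProduct_single_one (x ᵥ* A) j, ← dotProduct_mulVec, ← hf_eq, hfA]
  exact hfv (by rw [hf_eq, hv x hxA])

theorem stmt_11 (m : ℕ) (B : Matrix (Fin m) (Fin m) (ZMod 2)) (hB : B.IsSymm) :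
    ∃ c : Fin m → ZMod 2, B.mulVec c = fun i => B i i := by
  refine exists_mulVec_eq_of_forall_vecMul_eq_zero fun x hx => ?_
  calc x ⬝ᵥ (fun i => B i i) = ∑ i, B i i * x i ^ 2 := by
        simp only [dotProduct, ZMod.pow_card, mul_comm]
    _ = x ⬝ᵥ B *ᵥ x := (hB.dotProduct_mulVec_self_of_charTwo x).symm
    _ = 0 := by rw [dotProduct_mulVec, hx, zero_dotProduct]
end

section
/- Let B be a symmetric m×m matrix over 𝔽₂ with diagonal vector d. Then the set of solutions c ∈ 𝔽₂^m of Bc = d is nonempty and has exactly 2^{m − rank(B)} elements; i.e., the characteristic sublinks of a framed link form a torsor over ker B, of cardinality 2^{dim ker B}. -/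
open Finset in
lemma quad_form_zmod2 (m : ℕ) (B : Matrix (Fin m) (Fin m) (ZMod 2)) (hB : B.IsSymm)
    (v : Fin m → ZMod 2) :
    ∑ i, (B.mulVec v) i * v i = ∑ i, B i i * v i := by
  have hsq : ∀ x : ZMod 2, x * x = x := by decide
  have h2 : ∀ x : ZMod 2, x + x = 0 := by decide
  have hBs : ∀ i j, B j i = B i j := fun i j => by
    have := congrFun (congrFun hB i) j
    simpa [Matrix.transpose_apply] using this
  simp only [Matrix.mulVec, dotProduct, Finset.sum_mul]
  have step1 : ∑ i, ∑ j, B i j * v j * v i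
      = ∑ p ∈ (univ ×ˢ univ : Finset (Fin m × Fin m)), B p.1 p.2 * v p.2 * v p.1 := by
    rw [Finset.sum_product]
  rw [step1, ← Finset.diag_union_offDiag,
    Finset.sum_union (Finset.disjoint_diag_offDiag _), Finset.sum_diag]
  have hdiag : ∑ i, B i i * v i * v i = ∑ i, B i i * v i := by
    refine Finset.sum_congr rfl fun i _ => ?_
    rw [mul_assoc, hsq]
  have hoff : ∑ p ∈ (univ : Finset (Fin m)).offDiag, B p.1 p.2 * v p.2 * v p.1 = 0 := by
    refine Finset.sum_involution (fun p _ => p.swap) ?_ ?_ ?_ ?_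
    · intro p hp
      show B p.1 p.2 * v p.2 * v p.1 + B p.2 p.1 * v p.1 * v p.2 = 0
      rw [hBs p.2 p.1]
      linear_combination h2 (B p.2 p.1 * v p.2 * v p.1)
    · intro p hp _
      rw [Finset.mem_offDiag] at hp
      intro h
      exact hp.2.2 (congrArg Prod.snd h)
    · intro p hp
      rw [Finset.mem_offDiag] at hp ⊢
      exact ⟨Finset.mem_univ _, Finset.mem_univ _, fun h => hp.2.2 h.symm⟩
    · intro p hp
      rfl
  rw [hdiag, hoff, add_zero]

lemma diag_mem_range (m : ℕ) (B : Matrix (Fin m) (Fin m) (ZMod 2)) (hB : B.IsSymm) :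
    (fun i => B i i) ∈ LinearMap.range B.mulVecLin := by
  by_contra hd
  obtain ⟨φ, hφd, hφm⟩ := Submodule.exists_dual_map_eq_bot_of_notMem hd inferInstance
  obtain ⟨v, rfl⟩ := (Module.piEquiv (Fin m) (ZMod 2) (ZMod 2)).surjective φ
  have h1 : Module.piEquiv (Fin m) (ZMod 2) (ZMod 2) v (B.mulVec v) = 0 := by
    have : Module.piEquiv (Fin m) (ZMod 2) (ZMod 2) v (B.mulVec v) ∈
        (LinearMap.range B.mulVecLin).map (Module.piEquiv (Fin m) (ZMod 2) (ZMod 2) v) :=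
      ⟨B.mulVec v, ⟨v, rfl⟩, rfl⟩
    rwa [hφm, Submodule.mem_bot] at this
  rw [Module.piEquiv_apply_apply] at h1 hφd
  simp only [smul_eq_mul] at h1 hφd
  rw [quad_form_zmod2 m B hB v] at h1
  exact hφd h1

theorem stmt_12 (m : ℕ) (B : Matrix (Fin m) (Fin m) (ZMod 2)) (hB : B.IsSymm) :
    (∃ c : Fin m → ZMod 2, B.mulVec c = fun i => B i i) ∧
    Nat.card {c : Fin m → ZMod 2 // B.mulVec c = fun i => B i i} = 2 ^ (m - B.rank) := by
  obtain ⟨c₀, hc₀⟩ := diag_mem_range m B hB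
  have hc₀' : B.mulVec c₀ = fun i => B i i := hc₀
  refine ⟨⟨c₀, hc₀'⟩, ?_⟩
  have e : {c : Fin m → ZMod 2 // B.mulVec c = fun i => B i i} ≃
      LinearMap.ker B.mulVecLin := by
    refine ⟨fun c => ⟨c.1 - c₀, ?_⟩, fun k => ⟨k.1 + c₀, ?_⟩, fun c => by simp, fun k => by simp⟩
    · have := c.2
      simp only [LinearMap.mem_ker, map_sub, Matrix.mulVecLin_apply, this, hc₀']
      simp
    · have hk := k.2
      rw [LinearMap.mem_ker] at hk
      have hadd : B.mulVec (k.1 + c₀) = B.mulVec k.1 + B.mulVec c₀ := by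
        simp [Matrix.mulVec_add]
      rw [hadd]
      have hk' : B.mulVec k.1 = 0 := hk
      rw [hk', hc₀', zero_add]
  rw [Nat.card_congr e]
  have hrn := LinearMap.finrank_range_add_finrank_ker B.mulVecLin
  have hr : B.rank = Module.finrank (ZMod 2) (LinearMap.range B.mulVecLin) := rfl
  have hm : Module.finrank (ZMod 2) (Fin m → ZMod 2) = m := by simp
  have hdim : Module.finrank (ZMod 2) (LinearMap.ker B.mulVecLin) = m - B.rank := by
    rw [hr]; omega
  rw [← hdim]
  have : Fintype ↥(LinearMap.ker B.mulVecLin) := Fintype.ofFinite _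
  rw [Nat.card_eq_fintype_card, Module.card_eq_pow_finrank (K := ZMod 2), ZMod.card]
end
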